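/- arXiv:2201.02487 — 3 statements merged into one kernel-verified Lean document; each statement's English description precedes it below -/
import Mathlib

section
/- For an s×r real matrix M and positive integer d, letting d' = min(d, r), the maximum of ‖Mᵀ X‖_F² over s×d matrices X with XᵀX = I_d equals the maximum of ‖Mᵀ X‖_F² over s×d' matrices X with XᵀX = I_{d'}. -/
open Matrix Finset

/-- Squared Frobenius norm of a real matrix. -/
noncomputable def frob2 {m n : Type*} [Fintype m] [Fintype n] (M : Matrix m n ℝ) : ℝ :=
  ∑ i, ∑ j, (M i j) ^ 2

open Module

lemma frob2_le {s r n : ℕ} (M : Matrix (Fin s) (Fin r) ℝ)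
    (X : Matrix (Fin s) (Fin n) ℝ) (hX : Xᵀ * X = 1) :
    frob2 (Mᵀ * X) ≤ frob2 M := by
  unfold frob2
  conv_rhs => rw [Finset.sum_comm]
  apply Finset.sum_le_sum
  intro l _
  set v : Fin s → ℝ := fun i => M i l with hv
  set a : Fin n → ℝ := fun j => ∑ k, M k l * X k j with ha
  have hXe : ∀ j j' : Fin n, ∑ i, X i j * X i j' = if j = j' then 1 else 0 := by
    intro j j'
    have := congrFun (congrFun hX j) j'
    simpa [Matrix.mul_apply, Matrix.one_apply, Matrix.transpose_apply] using this
  have hw2 : ∑ i, (∑ j, X i j * a j) ^ 2 = ∑ j, a j ^ 2 := by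
    have h1 : ∀ i, (∑ j, X i j * a j) ^ 2 = ∑ j, ∑ j', (a j * a j') * (X i j * X i j') := by
      intro i
      rw [sq, Finset.sum_mul_sum]
      exact Finset.sum_congr rfl fun j _ => Finset.sum_congr rfl fun j' _ => by ring
    simp_rw [h1]
    rw [Finset.sum_comm]
    refine Finset.sum_congr rfl fun j _ => ?_
    rw [Finset.sum_comm]
    have h2 : ∀ j', ∑ i, (a j * a j') * (X i j * X i j') = (a j * a j') * (if j = j' then 1 else 0) := by
      intro j'
      rw [← Finset.mul_sum, hXe]
    simp_rw [h2]
    simp [mul_ite, mul_one, mul_zero, Finset.sum_ite_eq, sq]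
  have hvw : ∑ i, v i * (∑ j, X i j * a j) = ∑ j, a j ^ 2 := by
    simp_rw [Finset.mul_sum]
    rw [Finset.sum_comm]
    refine Finset.sum_congr rfl fun j _ => ?_
    have h3 : ∑ i, v i * (X i j * a j) = (∑ i, v i * X i j) * a j := by
      rw [Finset.sum_mul]
      exact Finset.sum_congr rfl fun i _ => by ring
    have h4 : ∑ i, v i * X i j = a j := rfl
    rw [h3, h4]; ring
  have key : ∑ i, (v i - ∑ j, X i j * a j) ^ 2 = ∑ i, v i ^ 2 - ∑ j, a j ^ 2 := by
    have h5 : ∀ i, (v i - ∑ j, X i j * a j) ^ 2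
        = v i ^ 2 - 2 * (v i * (∑ j, X i j * a j)) + (∑ j, X i j * a j) ^ 2 := by
      intro i; ring
    rw [Finset.sum_congr rfl fun i _ => h5 i, Finset.sum_add_distrib, Finset.sum_sub_distrib,
      ← Finset.mul_sum, hvw, hw2]
    ring
  have hnn : 0 ≤ ∑ i, (v i - ∑ j, X i j * a j) ^ 2 :=
    Finset.sum_nonneg fun i _ => sq_nonneg _
  have hMTX : ∀ j, (Mᵀ * X) l j = a j := by
    intro j; simp [Matrix.mul_apply, ha, Matrix.transpose_apply]
  calc ∑ j, (Mᵀ * X) l j ^ 2 = ∑ j, a j ^ 2 :=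
        Finset.sum_congr rfl fun j _ => by rw [hMTX j]
    _ ≤ ∑ i, v i ^ 2 := by linarith [key, hnn]

lemma frob2_attain {s r n : ℕ} (M : Matrix (Fin s) (Fin r) ℝ) (hns : n ≤ s)
    (hrank : finrank ℝ (Submodule.span ℝ
      (Set.range fun l => (WithLp.toLp 2 (fun i => M i l) : EuclideanSpace ℝ (Fin s)))) ≤ n) :
    ∃ X : Matrix (Fin s) (Fin n) ℝ, Xᵀ * X = 1 ∧ frob2 (Mᵀ * X) = frob2 M := by
  classical
  set E := EuclideanSpace ℝ (Fin s)
  set col : Fin r → E := fun l => (WithLp.toLp 2 (fun i => M i l) : EuclideanSpace ℝ (Fin s)) with hcol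
  set V : Submodule ℝ E := Submodule.span ℝ (Set.range col) with hV
  set k : ℕ := finrank ℝ V with hk
  have hkn : k ≤ n := hrank
  have hks : k ≤ s := hkn.trans hns
  let b0 : OrthonormalBasis (Fin k) ℝ V := (stdOrthonormalBasis ℝ V)
  let v : Fin k → E := fun t => (b0 t : E)
  have hv_on : Orthonormal ℝ v := b0.orthonormal.comp_linearIsometry V.subtypeₗᵢ
  have hVv : V = Submodule.span ℝ (Set.range v) := by
    have h1 : Submodule.span ℝ (Set.range b0.toBasis) = (⊤ : Submodule ℝ V) :=
      b0.toBasis.span_eq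
    have h2 : V = Submodule.map V.subtype ⊤ := (Submodule.map_subtype_top V).symm
    rw [h2, ← h1, Submodule.map_span, ← Set.range_comp]
    have h3 : (V.subtype ∘ b0.toBasis) = v := by
      funext t; simp [v]
    rw [h3]
  let vext : Fin s → E := fun i => if h : (i : ℕ) < k then v ⟨i, h⟩ else 0
  let S : Set (Fin s) := {i | (i : ℕ) < k}
  have hrest : Orthonormal ℝ (S.restrict vext) := by
    have : S.restrict vext = v ∘ (fun i : S => (⟨(i : Fin s), i.2⟩ : Fin k)) := by
      funext i
      simp only [Set.restrict_apply, vext, Function.comp]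
      exact dif_pos i.2
    rw [this]
    refine hv_on.comp _ fun a b hab => ?_
    have h5 : ((a : Fin s) : ℕ) = ((b : Fin s) : ℕ) := by
      have h6 := Fin.mk.injEq (n := k) _ _ _ _ ▸ hab
      simpa using congrArg Fin.val hab
    exact Subtype.ext (Fin.ext h5)
  have hcard : finrank ℝ E = Fintype.card (Fin s) := by
    simp [E, finrank_euclideanSpace]
  obtain ⟨b, hb⟩ := hrest.exists_orthonormalBasis_extension_of_card_eq hcard
  -- the matrix
  set X : Matrix (Fin s) (Fin n) ℝ := Matrix.of fun (i : Fin s) (j : Fin n) => b (Fin.castLE hns j) i with hXdef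
  refine ⟨X, ?_, ?_⟩
  · ext j j'
    have hbo := orthonormal_iff_ite.mp b.orthonormal (Fin.castLE hns j) (Fin.castLE hns j')
    have hinner : (inner ℝ (b (Fin.castLE hns j)) (b (Fin.castLE hns j')) : ℝ)
        = ∑ i, b (Fin.castLE hns j) i * b (Fin.castLE hns j') i := by
      rw [PiLp.inner_apply]
      simp [RCLike.inner_apply, starRingEnd_apply, mul_comm]
    rw [hinner] at hbo
    simp only [Matrix.mul_apply, Matrix.transpose_apply, Matrix.one_apply, X, Matrix.of_apply]
    rw [hbo]
    by_cases h : j = j'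
    · simp [h]
    · have hne2 : Fin.castLE hns j ≠ Fin.castLE hns j' :=
        fun hc => h (Fin.castLE_injective hns hc)
      simp [h, hne2]
  · -- frob2 equality
    have hvan : ∀ i : Fin s, n ≤ (i : ℕ) → ∀ x ∈ V, (inner ℝ x (b i) : ℝ) = 0 := by
      intro i hi x hx
      rw [hVv] at hx
      induction hx using Submodule.span_induction with
      | mem y hy =>
          obtain ⟨t, rfl⟩ := hy
          have hts : (t : ℕ) < s := lt_of_lt_of_le t.2 hks
          have hmem : (⟨(t : ℕ), hts⟩ : Fin s) ∈ S := by
            simp only [S, Set.mem_setOf_eq]; exact t.2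
          have : b ⟨(t : ℕ), hts⟩ = v t := by
            rw [hb _ hmem]
            simp only [vext]
            rw [dif_pos]
            congr 1
          rw [← this]
          have hne : (⟨(t : ℕ), hts⟩ : Fin s) ≠ i := by
            intro hc
            have := congrArg Fin.val hc
            simp at this
            omega
          have := orthonormal_iff_ite.mp b.orthonormal ⟨(t : ℕ), hts⟩ i
          rw [this]
          simp [hne]
      | zero => simp
      | add y z _ _ hy hz => rw [inner_add_left, hy, hz, add_zero]
      | smul c y _ hy => rw [inner_smul_left, hy, mul_zero]
    -- Parseval per column
    have hcolmem : ∀ l, col l ∈ V := fun l => Submodule.subset_span (Set.mem_range_self l)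
    unfold frob2
    rw [Finset.sum_comm (s := (univ : Finset (Fin s)))]
    refine Finset.sum_congr rfl fun l _ => ?_
    set m : E := col l with hm
    have hentry : ∀ j : Fin n, (Mᵀ * X) l j
        = (inner ℝ m (b (Fin.castLE hns j)) : ℝ) := by
      intro j
      rw [PiLp.inner_apply]
      simp [Matrix.mul_apply, Matrix.transpose_apply, RCLike.inner_apply, starRingEnd_apply,
        m, col, X, Matrix.of_apply, mul_comm]
    have hPar : ∑ i : Fin s, (inner ℝ m (b i) : ℝ) ^ 2 = ∑ i : Fin s, (m i) ^ 2 := by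
      have := b.sum_inner_mul_inner m m
      have h2 : ∀ i : Fin s, (inner ℝ m (b i) : ℝ) * (inner ℝ (b i) m : ℝ)
          = (inner ℝ m (b i) : ℝ) ^ 2 := by
        intro i; rw [real_inner_comm (b i) m, sq]
      rw [Finset.sum_congr rfl fun i _ => h2 i] at this
      rw [this]
      rw [PiLp.inner_apply]
      simp [RCLike.inner_apply, starRingEnd_apply, sq]
    have hsubset : ∑ j : Fin n, (inner ℝ m (b (Fin.castLE hns j)) : ℝ) ^ 2
        = ∑ i : Fin s, (inner ℝ m (b i) : ℝ) ^ 2 := by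
      have hmap : ∑ j : Fin n, (inner ℝ m (b (Fin.castLE hns j)) : ℝ) ^ 2
          = ∑ i ∈ univ.map (Fin.castLEEmb hns), (inner ℝ m (b i) : ℝ) ^ 2 := by
        rw [Finset.sum_map]
        rfl
      rw [hmap]
      apply Finset.sum_subset (Finset.subset_univ _)
      intro i _ hnotin
      have hni : n ≤ (i : ℕ) := by
        by_contra hc
        push_neg at hc
        exact hnotin (Finset.mem_map.mpr ⟨⟨(i : ℕ), hc⟩, Finset.mem_univ _, by
          simp [Fin.castLEEmb]⟩)
      rw [hvan i hni m (hcolmem l)]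
      simp
    calc ∑ j : Fin n, (Mᵀ * X) l j ^ 2
        = ∑ j : Fin n, (inner ℝ m (b (Fin.castLE hns j)) : ℝ) ^ 2 :=
          Finset.sum_congr rfl fun j _ => by rw [hentry j]
      _ = ∑ i : Fin s, (inner ℝ m (b i) : ℝ) ^ 2 := hsubset
      _ = ∑ i : Fin s, (m i) ^ 2 := hPar
      _ = ∑ i : Fin s, (M i l) ^ 2 := rfl

lemma exists_greatest_frob2 {s r n : ℕ} (M : Matrix (Fin s) (Fin r) ℝ) (hns : n ≤ s) :
    ∃ v, IsGreatest {v | ∃ X : Matrix (Fin s) (Fin n) ℝ, Xᵀ * X = 1 ∧ v = frob2 (Mᵀ * X)} v := by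
  classical
  set f : Matrix (Fin s) (Fin n) ℝ → ℝ := fun X => frob2 (Mᵀ * X) with hf
  have hfc : Continuous f := by
    apply continuous_finset_sum
    intro i _
    apply continuous_finset_sum
    intro j _
    have h1 : Continuous fun X : Matrix (Fin s) (Fin n) ℝ => (Mᵀ * X) i j := by
      simp_rw [Matrix.mul_apply]
      exact continuous_finset_sum _ fun k _ =>
        continuous_const.mul ((continuous_apply j).comp (continuous_apply k))
    exact h1.pow 2
  set K : Set (Matrix (Fin s) (Fin n) ℝ) := {X | Xᵀ * X = 1} with hK
  have hKcl : IsClosed K := by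
    have hg : Continuous fun X : Matrix (Fin s) (Fin n) ℝ => Xᵀ * X :=
      (Continuous.matrix_transpose continuous_id).matrix_mul continuous_id
    exact isClosed_eq hg continuous_const
  have hdiag : ∀ X ∈ K, ∀ (i : Fin s) (j : Fin n), X i j ^ 2 ≤ 1 := by
    intro X hX i j
    have h1 : ∑ i, X i j * X i j = 1 := by
      have := congrFun (congrFun (hK ▸ hX) j) j
      simpa [Matrix.mul_apply, Matrix.one_apply] using this
    have h2 : X i j * X i j ≤ ∑ i, X i j * X i j :=
      Finset.single_le_sum (fun i _ => mul_self_nonneg (X i j)) (Finset.mem_univ i)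
    rw [h1] at h2
    nlinarith
  set B : Set (Matrix (Fin s) (Fin n) ℝ) :=
    Set.univ.pi fun _ : Fin s => Set.univ.pi fun _ : Fin n => Set.Icc (-1 : ℝ) 1 with hB
  have hBc : IsCompact B :=
    isCompact_univ_pi fun _ => isCompact_univ_pi fun _ => isCompact_Icc
  have hKB : K ⊆ B := by
    intro X hX
    intro i _
    intro j _
    have := hdiag X hX i j
    constructor <;> nlinarith
  have hKc : IsCompact K := hBc.of_isClosed_subset hKcl hKB
  have hne : K.Nonempty := by
    refine ⟨Matrix.of fun (i : Fin s) (j : Fin n) => if (i : ℕ) = (j : ℕ) then 1 else 0, ?_⟩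
    show _ = (1 : Matrix (Fin n) (Fin n) ℝ)
    ext j j'
    rw [Matrix.mul_apply]
    have h1 : ∑ i : Fin s,
        (Matrix.of fun (i : Fin s) (j : Fin n) => if (i : ℕ) = (j : ℕ) then (1:ℝ) else 0)ᵀ j i *
        (Matrix.of fun (i : Fin s) (j : Fin n) => if (i : ℕ) = (j : ℕ) then (1:ℝ) else 0) i j'
        = ∑ i : Fin s, (if (i : ℕ) = (j : ℕ) then (1:ℝ) else 0) *
            (if (i : ℕ) = (j' : ℕ) then (1:ℝ) else 0) := rfl
    rw [h1, Finset.sum_eq_single (Fin.castLE hns j)]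
    · simp only [Fin.coe_castLE]
      by_cases h : j = j'
      · simp [h, Matrix.one_apply]
      · have : (j : ℕ) ≠ (j' : ℕ) := fun hc => h (Fin.ext hc)
        simp [Matrix.one_apply, h, this]
    · intro i _ hi
      have : (i : ℕ) ≠ (j : ℕ) := by
        intro hc
        exact hi (Fin.ext (by simp [hc]))
      simp [this]
    · intro h; exact absurd (Finset.mem_univ _) h
  obtain ⟨v, hv⟩ := (hKc.image hfc).exists_isGreatest (hne.image f)
  refine ⟨v, ?_⟩
  have hset : {v | ∃ X : Matrix (Fin s) (Fin n) ℝ, Xᵀ * X = 1 ∧ v = frob2 (Mᵀ * X)} = f '' K := by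
    ext w
    constructor
    · rintro ⟨X, hX1, hX2⟩
      exact ⟨X, hX1, hX2.symm⟩
    · rintro ⟨X, hX1, hX2⟩
      exact ⟨X, hX1, hX2.symm⟩
  rwa [hset]

/-- The maximum of ‖Mᵀ X‖_F² over s×d matrices X with XᵀX = I_d equals the maximum of
‖Mᵀ X‖_F² over s×d' matrices X with XᵀX = I_{d'}, where d' = min(d, r). -/
theorem stmt1 {s r : ℕ} (M : Matrix (Fin s) (Fin r) ℝ) (d : ℕ) (hd : 0 < d) (hds : d ≤ s) :
    ∃ v : ℝ,
      IsGreatest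
        {v | ∃ X : Matrix (Fin s) (Fin d) ℝ, Xᵀ * X = 1 ∧ v = frob2 (Mᵀ * X)} v ∧
      IsGreatest
        {v | ∃ X : Matrix (Fin s) (Fin (min d r)) ℝ, Xᵀ * X = 1 ∧ v = frob2 (Mᵀ * X)} v := by
  rcases le_or_gt d r with hdr | hrd
  · rw [Nat.min_eq_left hdr]
    obtain ⟨v, hv⟩ := exists_greatest_frob2 M hds
    exact ⟨v, hv, hv⟩
  · rw [Nat.min_eq_right hrd.le]
    have hrs : r ≤ s := (hrd.trans_le hds).le
    have hrank : finrank ℝ (Submodule.span ℝ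
        (Set.range fun l => (WithLp.toLp 2 (fun i => M i l) : EuclideanSpace ℝ (Fin s)))) ≤ r := by
      have h := finrank_range_le_card (R := ℝ)
        (fun l : Fin r => (WithLp.toLp 2 (fun i => M i l) : EuclideanSpace ℝ (Fin s)))
      simpa [Set.finrank] using h
    obtain ⟨Xr, hXr1, hXr2⟩ := frob2_attain M hrs hrank
    obtain ⟨Xd, hXd1, hXd2⟩ := frob2_attain M hds (hrank.trans hrd.le)
    refine ⟨frob2 M, ⟨⟨Xd, hXd1, hXd2.symm⟩, ?_⟩, ⟨Xr, hXr1, hXr2.symm⟩, ?_⟩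
    · rintro w ⟨X, hX, rfl⟩
      exact frob2_le M X hX
    · rintro w ⟨X, hX, rfl⟩
      exact frob2_le M X hX
end

section
/- A feasible integer circulation f in a directed graph with integer capacities and rational arc profits is of maximum profit if and only if every directed circuit in the residual graph D_f has nonpositive profit. -/
open Finset
open scoped Classical

section Circulation

variable {V A : Type} [Fintype V] [Fintype A]

/-- `f` is a circulation on the directed graph with arc-tail map `tail` and arc-head map
`head`: flow conservation holds at every vertex. -/
def IsCirculation (tl hd : A → V) (f : A → ℤ) : Prop :=
  ∀ v : V, ∑ a ∈ univ.filter (fun a => hd a = v), f a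
         = ∑ a ∈ univ.filter (fun a => tl a = v), f a

/-- `f` is a feasible integer circulation: a circulation with 0 ≤ f ≤ u. -/
def FeasibleCirc (tl hd : A → V) (u : A → ℤ) (f : A → ℤ) : Prop :=
  IsCirculation tl hd f ∧ ∀ a, 0 ≤ f a ∧ f a ≤ u a

/-- Arcs of the residual graph D_f: `Sum.inl a` is the forward copy of `a` (present when
`f a < u a`), `Sum.inr a` is the reverse copy (present when `f a > 0`). -/
def ResValid (u f : A → ℤ) : A ⊕ A → Prop
  | Sum.inl a => f a < u a
  | Sum.inr a => 0 < f a

/-- Tail of a residual arc. -/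
def resTail (tl hd : A → V) : A ⊕ A → V
  | Sum.inl a => tl a
  | Sum.inr a => hd a

/-- Head of a residual arc. -/
def resHead (tl hd : A → V) : A ⊕ A → V
  | Sum.inl a => hd a
  | Sum.inr a => tl a

/-- Profit of a residual arc: p_a on forward arcs, -p_a on reverse arcs. -/
def resProfit (p : A → ℚ) : A ⊕ A → ℚ
  | Sum.inl a => p a
  | Sum.inr a => -p a

/-- `c` is a directed circuit in the residual graph D_f: a cyclic sequence of m ≥ 1
residual arcs, consecutive arcs sharing head/tail, visiting pairwise distinct vertices. -/
def IsResCircuit (tl hd : A → V) (u f : A → ℤ) {m : ℕ} (hm : 0 < m)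
    (c : Fin m → A ⊕ A) : Prop :=
  (∀ i, ResValid u f (c i)) ∧
  (∀ i : Fin m, resHead tl hd (c i) = resTail tl hd (c ⟨(i.1 + 1) % m, Nat.mod_lt _ hm⟩)) ∧
  Function.Injective (fun i => resTail tl hd (c i))

end Circulation

section Aux

variable {V A : Type} [Fintype V] [Fintype A]

noncomputable def ind (a : A) (s : A ⊕ A) : ℤ :=
  (if s = Sum.inl a then 1 else 0) - (if s = Sum.inr a then 1 else 0)

noncomputable def circE {m : ℕ} (c : Fin m → A ⊕ A) (a : A) : ℤ := ∑ i, ind a (c i)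

def dval (d : A → ℤ) : A ⊕ A → ℤ
  | Sum.inl a => d a
  | Sum.inr a => - d a

lemma fin_cyc {m : ℕ} [NeZero m] (hm : 0 < m) (i : Fin m) :
    (⟨(i.1 + 1) % m, Nat.mod_lt _ hm⟩ : Fin m) = i + 1 := by
  apply Fin.eq_of_val_eq
  simp [Fin.add_def, Fin.val_one', Nat.add_mod_mod]

lemma circE_circulation {m : ℕ} (hm : 0 < m) (tl hd : A → V) (c : Fin m → A ⊕ A)
    (hcyc : ∀ i : Fin m, resHead tl hd (c i)
      = resTail tl hd (c ⟨(i.1 + 1) % m, Nat.mod_lt _ hm⟩)) :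
    IsCirculation tl hd (circE c) := by
  haveI : NeZero m := ⟨hm.ne'⟩
  have hcyc' : ∀ i : Fin m, resHead tl hd (c i) = resTail tl hd (c (i + 1)) := by
    intro i; rw [← fin_cyc hm i]; exact hcyc i
  intro v
  have key : ∀ s : A ⊕ A,
      (∑ a ∈ univ.filter (fun a => hd a = v), ind a s)
        - (∑ a ∈ univ.filter (fun a => tl a = v), ind a s)
      = (if resHead tl hd s = v then (1:ℤ) else 0)
        - (if resTail tl hd s = v then (1:ℤ) else 0) := by
    rintro (b | b) <;>
      simp [ind, resHead, resTail, Finset.sum_ite_eq', eq_comm, sub_eq_iff_eq_add] <;>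
      split <;> split <;> simp_all
  have h1 : ∑ a ∈ univ.filter (fun a => hd a = v), circE c a
      = ∑ i : Fin m, ∑ a ∈ univ.filter (fun a => hd a = v), ind a (c i) := Finset.sum_comm
  have h2 : ∑ a ∈ univ.filter (fun a => tl a = v), circE c a
      = ∑ i : Fin m, ∑ a ∈ univ.filter (fun a => tl a = v), ind a (c i) := Finset.sum_comm
  have h3 : ∑ i : Fin m, (if resHead tl hd (c i) = v then (1:ℤ) else 0)
      = ∑ i : Fin m, (if resTail tl hd (c i) = v then (1:ℤ) else 0) := by
    have h4 : ∀ i : Fin m, (if resHead tl hd (c i) = v then (1:ℤ) else 0)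
        = (if resTail tl hd (c (i+1)) = v then (1:ℤ) else 0) := by
      intro i; rw [hcyc' i]
    rw [Finset.sum_congr rfl (fun i _ => h4 i)]
    exact Equiv.sum_comp (Equiv.addRight (1 : Fin m))
      (fun j => if resTail tl hd (c j) = v then (1:ℤ) else 0)
  have h5 : ∑ i : Fin m, ((if resHead tl hd (c i) = v then (1:ℤ) else 0)
      - (if resTail tl hd (c i) = v then (1:ℤ) else 0)) = 0 := by
    rw [Finset.sum_sub_distrib, h3, sub_self]
  have h6 := Finset.sum_congr rfl (fun i (_ : i ∈ (univ : Finset (Fin m))) => key (c i))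
  rw [Finset.sum_sub_distrib] at h6
  rw [h1, h2]
  rw [h5] at h6
  linarith [h6]

lemma circE_profit {m : ℕ} (c : Fin m → A ⊕ A) (p : A → ℚ) :
    ∑ a, p a * ((circE c a : ℤ) : ℚ) = ∑ i, resProfit p (c i) := by
  have h1 : ∀ a, p a * ((circE c a : ℤ) : ℚ)
      = ∑ i, p a * ((ind a (c i) : ℤ) : ℚ) := by
    intro a
    rw [← Finset.mul_sum]
    congr 1
    unfold circE
    push_cast
    rfl
  rw [Finset.sum_congr rfl (fun a _ => h1 a), Finset.sum_comm]
  refine Finset.sum_congr rfl (fun i _ => ?_)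
  rcases hs : c i with b | b <;>
    simp [ind, resProfit, mul_ite, mul_sub, Finset.sum_ite_eq', eq_comm]

lemma circE_cases {m : ℕ} (c : Fin m → A ⊕ A) (hinj : Function.Injective c) (a : A) :
    (circE c a = 0 ∨ circE c a = 1 ∨ circE c a = -1) ∧
    (circE c a = 1 → ∃ i, c i = Sum.inl a) ∧
    (circE c a = -1 → ∃ i, c i = Sum.inr a) ∧
    ((∃ i, c i = Sum.inl a) → ¬(∃ i, c i = Sum.inr a) → circE c a = 1) ∧
    ((∃ i, c i = Sum.inr a) → ¬(∃ i, c i = Sum.inl a) → circE c a = -1) := by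
  set L := (univ.filter fun i => c i = Sum.inl a).card with hLdef
  set R := (univ.filter fun i => c i = Sum.inr a).card with hRdef
  have hE : circE c a = (L : ℤ) - (R : ℤ) := by
    unfold circE ind
    rw [Finset.sum_sub_distrib]
    rw [Finset.sum_boole, Finset.sum_boole]
  have hL1 : L ≤ 1 := by
    apply Finset.card_le_one.mpr
    intro i hi j hj
    simp only [Finset.mem_filter] at hi hj
    exact hinj (hi.2.trans hj.2.symm)
  have hR1 : R ≤ 1 := by
    apply Finset.card_le_one.mpr
    intro i hi j hj
    simp only [Finset.mem_filter] at hi hj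
    exact hinj (hi.2.trans hj.2.symm)
  have hLex : (∃ i, c i = Sum.inl a) ↔ 0 < L := by
    rw [Finset.card_pos, Finset.filter_nonempty_iff]
    simp
  have hRex : (∃ i, c i = Sum.inr a) ↔ 0 < R := by
    rw [Finset.card_pos, Finset.filter_nonempty_iff]
    simp
  refine ⟨by omega, fun h => hLex.mpr (by omega), fun h => hRex.mpr (by omega),
    fun h1 h2 => ?_, fun h1 h2 => ?_⟩
  · rw [hLex] at h1; rw [hRex] at h2; omega
  · rw [hRex] at h1; rw [hLex] at h2; omega

lemma exists_cycle (tl hd : A → V) (d : A → ℤ) (hcons : IsCirculation tl hd d)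
    (a₀ : A) (ha₀ : d a₀ ≠ 0) :
    ∃ (m : ℕ) (hm : 0 < m) (c : Fin m → A ⊕ A),
      (∀ i, 0 < dval d (c i)) ∧
      (∀ i : Fin m, resHead tl hd (c i)
        = resTail tl hd (c ⟨(i.1 + 1) % m, Nat.mod_lt _ hm⟩)) ∧
      Function.Injective (fun i => resTail tl hd (c i)) := by
  -- step lemma
  have step : ∀ v : V, (∃ s : A ⊕ A, 0 < dval d s ∧ resHead tl hd s = v) →
      ∃ t : A ⊕ A, 0 < dval d t ∧ resTail tl hd t = v := by
    rintro v ⟨s₀, hs₀, hhead⟩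
    by_contra hno
    push_neg at hno
    have hT : ∑ s : A ⊕ A, (if resTail tl hd s = v then dval d s else 0) = 0 := by
      rw [Fintype.sum_sum_type]
      have e1 : ∀ a : A, (if resTail tl hd (Sum.inl a) = v then dval d (Sum.inl a) else 0)
          = (if tl a = v then d a else 0) := fun a => rfl
      have e2 : ∀ a : A, (if resTail tl hd (Sum.inr a) = v then dval d (Sum.inr a) else 0)
          = -(if hd a = v then d a else 0) := by
        intro a; show (if hd a = v then -d a else 0) = _; split <;> simp
      rw [Finset.sum_congr rfl (fun a _ => e1 a), Finset.sum_congr rfl (fun a _ => e2 a),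
        Finset.sum_neg_distrib, ← Finset.sum_filter, ← Finset.sum_filter, hcons v]
      ring
    have hlt : ∑ s : A ⊕ A, (if resTail tl hd s = v then dval d s else 0) < 0 := by
      have hle : ∀ s ∈ (univ : Finset (A ⊕ A)),
          (if resTail tl hd s = v then dval d s else 0) ≤ (0 : ℤ) := by
        intro s _
        split
        · rename_i h
          by_contra hpos
          push_neg at hpos
          exact hno s hpos h
        · exact le_refl 0
      have hw : ∃ s ∈ (univ : Finset (A ⊕ A)),
          (if resTail tl hd s = v then dval d s else 0) < (0 : ℤ) := by
        refine ⟨Sum.swap s₀, Finset.mem_univ _, ?_⟩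
        have ht : resTail tl hd (Sum.swap s₀) = v := by
          rcases s₀ with b | b <;> simpa [resTail, resHead, Sum.swap] using hhead
        have hv : dval d (Sum.swap s₀) < 0 := by
          rcases s₀ with b | b <;> simp [dval, Sum.swap] at hs₀ ⊢ <;> linarith
        rw [if_pos ht]
        exact hv
      calc ∑ s : A ⊕ A, (if resTail tl hd s = v then dval d s else 0)
          < ∑ _s : A ⊕ A, (0 : ℤ) := by
            obtain ⟨s₁, hs₁u, hs₁⟩ := hw
            exact Finset.sum_lt_sum hle ⟨s₁, hs₁u, hs₁⟩
        _ = 0 := by simp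
    omega
  -- starting arc
  have hstart : ∃ s : A ⊕ A, 0 < dval d s := by
    rcases lt_or_gt_of_ne ha₀ with h | h
    · exact ⟨Sum.inr a₀, by simpa [dval] using h⟩
    · exact ⟨Sum.inl a₀, h⟩
  obtain ⟨s₀, hs₀⟩ := hstart
  -- build infinite walk
  have hstep' : ∀ s : {s : A ⊕ A // 0 < dval d s}, ∃ t : {s : A ⊕ A // 0 < dval d s},
      resTail tl hd t.1 = resHead tl hd s.1 := by
    intro s
    obtain ⟨t, ht, htt⟩ := step (resHead tl hd s.1) ⟨s.1, s.2, rfl⟩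
    exact ⟨⟨t, ht⟩, htt⟩
  choose nxt hnxt using hstep'
  set seq : ℕ → {s : A ⊕ A // 0 < dval d s} :=
    fun n => Nat.rec ⟨s₀, hs₀⟩ (fun _ s => nxt s) n with hseqdef
  have hseq : ∀ n, resTail tl hd (seq (n+1)).1 = resHead tl hd (seq n).1 :=
    fun n => hnxt _
  set w : ℕ → V := fun n => resTail tl hd (seq n).1 with hwdef
  -- find repetition
  have hrep : ∃ n, ∃ k, k < n ∧ w k = w n := by
    obtain ⟨i, j, hne, hij⟩ := Fintype.exists_ne_map_eq_of_card_lt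
      (fun n : Fin (Fintype.card V + 1) => w n.1) (by simp)
    rcases (Fin.val_ne_of_ne hne).lt_or_gt with h | h
    · exact ⟨j.1, i.1, h, hij⟩
    · exact ⟨i.1, j.1, h, hij.symm⟩
  set j₀ := Nat.find hrep with hj₀def
  obtain ⟨k, hk, hkw⟩ := Nat.find_spec hrep
  have hmin : ∀ n < j₀, ¬ ∃ k', k' < n ∧ w k' = w n := fun n hn => Nat.find_min hrep hn
  have hinjw : ∀ n₁, n₁ < j₀ → ∀ n₂, n₂ < j₀ → w n₁ = w n₂ → n₁ = n₂ := by
    intro n₁ h₁ n₂ h₂ he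
    by_contra hne
    rcases Nat.lt_or_ge n₁ n₂ with h | h
    · exact hmin n₂ h₂ ⟨n₁, h, he⟩
    · have h' : n₂ < n₁ := by omega
      exact hmin n₁ h₁ ⟨n₂, h', he.symm⟩
  have hmlt : 0 < j₀ - k := by omega
  refine ⟨j₀ - k, hmlt, fun i => (seq (k + i.1)).1, fun i => (seq _).2, ?_, ?_⟩
  · intro i
    by_cases hlast : i.1 + 1 = j₀ - k
    · have hidx : ((⟨(i.1 + 1) % (j₀ - k), Nat.mod_lt _ hmlt⟩ : Fin (j₀ - k))).1 = 0 := by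
        show (i.1 + 1) % (j₀ - k) = 0
        rw [hlast]
        exact Nat.mod_self _
      have h1 : resHead tl hd (seq (k + i.1)).1 = w (k + i.1 + 1) := (hseq _).symm
      have h2 : k + i.1 + 1 = j₀ := by omega
      rw [h1, h2, ← hkw]
      show w k = resTail tl hd (seq (k + _)).1
      rw [hidx, Nat.add_zero]
    · have hlt2 : i.1 + 1 < j₀ - k := by omega
      have hidx : ((⟨(i.1 + 1) % (j₀ - k), Nat.mod_lt _ hmlt⟩ : Fin (j₀ - k))).1 = i.1 + 1 :=
        Nat.mod_eq_of_lt hlt2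
      show resHead tl hd (seq (k + i.1)).1 = resTail tl hd (seq (k + _)).1
      rw [hidx, show k + (i.1 + 1) = (k + i.1) + 1 by omega]
      exact (hseq _).symm
  · intro i j hEq
    simp only at hEq
    have h1 : k + i.1 < j₀ := by omega
    have h2 : k + j.1 < j₀ := by omega
    have := hinjw _ h1 _ h2 hEq
    apply Fin.eq_of_val_eq
    omega

end Aux


/-- A feasible integer circulation has maximum profit iff every directed circuit in the
residual graph D_f has nonpositive profit. -/
theorem stmt12 {V A : Type} [Fintype V] [Fintype A] (tl hd : A → V) (u : A → ℤ)
    (hu : ∀ a, 0 ≤ u a) (p : A → ℚ) (f : A → ℤ) (hf : FeasibleCirc tl hd u f) :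
    (∀ g, FeasibleCirc tl hd u g → ∑ a, p a * (g a : ℚ) ≤ ∑ a, p a * (f a : ℚ)) ↔
    (∀ (m : ℕ) (hm : 0 < m) (c : Fin m → A ⊕ A),
      IsResCircuit tl hd u f hm c → ∑ i, resProfit p (c i) ≤ 0) := by
  obtain ⟨hfc, hfb⟩ := hf
  constructor
  · intro hmax m hm c hc
    obtain ⟨hval, hcyc, htinj⟩ := hc
    have hinj : Function.Injective c := fun i j hij => htinj (by simp only [hij])
    have hgc : IsCirculation tl hd (fun a => f a + circE c a) := by
      intro v
      simp only
      rw [Finset.sum_add_distrib, Finset.sum_add_distrib, hfc v,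
        circE_circulation hm tl hd c hcyc v]
    have hgb : ∀ a, 0 ≤ f a + circE c a ∧ f a + circE c a ≤ u a := by
      intro a
      obtain ⟨htri, h1, h2, -, -⟩ := circE_cases c hinj a
      have hfa := hfb a
      rcases htri with h | h | h
      · rw [h]; omega
      · obtain ⟨i, hi⟩ := h1 h
        have hv := hval i
        rw [hi] at hv
        have hv' : f a < u a := hv
        rw [h]; omega
      · obtain ⟨i, hi⟩ := h2 h
        have hv := hval i
        rw [hi] at hv
        have hv' : 0 < f a := hv
        rw [h]; omega
    have hle := hmax _ ⟨hgc, hgb⟩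
    have hsum : ∑ a, p a * ((f a + circE c a : ℤ) : ℚ)
        = ∑ a, p a * (f a : ℚ) + ∑ i, resProfit p (c i) := by
      rw [← circE_profit c p, ← Finset.sum_add_distrib]
      refine Finset.sum_congr rfl fun a _ => ?_
      push_cast
      ring
    rw [hsum] at hle
    linarith
  · intro hcirc
    have main : ∀ N : ℕ, ∀ g : A → ℤ, FeasibleCirc tl hd u g →
        (∑ a, (g a - f a).natAbs) ≤ N →
        ∑ a, p a * (g a : ℚ) ≤ ∑ a, p a * (f a : ℚ) := by
      intro N
      induction N with
      | zero =>
        intro g hg hle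
        have hz : ∀ a, g a = f a := by
          intro a
          have h0 : ∑ a, (g a - f a).natAbs = 0 := Nat.le_zero.mp hle
          have := (Finset.sum_eq_zero_iff.mp h0) a (mem_univ a)
          omega
        exact le_of_eq (Finset.sum_congr rfl fun a _ => by rw [hz a])
      | succ N ih =>
        intro g hg hle
        by_cases hgf : ∀ a, g a = f a
        · exact le_of_eq (Finset.sum_congr rfl fun a _ => by rw [hgf a])
        · push_neg at hgf
          obtain ⟨a₀, ha₀⟩ := hgf
          have hdcons : IsCirculation tl hd (fun a => g a - f a) := by
            intro v
            simp only
            rw [Finset.sum_sub_distrib, Finset.sum_sub_distrib, hg.1 v, hfc v]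
          obtain ⟨m, hm, c, hval, hcyc, htinj⟩ := exists_cycle tl hd _ hdcons a₀
            (sub_ne_zero.mpr ha₀)
          have hinj : Function.Injective c := fun i j hij => htinj (by simp only [hij])
          have hIL : ∀ a, (∃ i, c i = Sum.inl a) → f a < g a := by
            rintro a ⟨i, hi⟩
            have hv := hval i
            rw [hi] at hv
            have hv' : 0 < g a - f a := hv
            omega
          have hIR : ∀ a, (∃ i, c i = Sum.inr a) → g a < f a := by
            rintro a ⟨i, hi⟩
            have hv := hval i
            rw [hi] at hv
            have hv' : 0 < -(g a - f a) := hv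
            omega
          have htri : ∀ a, circE c a = 0 ∨ (circE c a = 1 ∧ f a < g a)
              ∨ (circE c a = -1 ∧ g a < f a) := by
            intro a
            obtain ⟨ht, h1, h2, h3, h4⟩ := circE_cases c hinj a
            by_cases hL : ∃ i, c i = Sum.inl a
            · by_cases hR : ∃ i, c i = Sum.inr a
              · exact absurd (hIR a hR) (by have := hIL a hL; omega)
              · exact Or.inr (Or.inl ⟨h3 hL hR, hIL a hL⟩)
            · by_cases hR : ∃ i, c i = Sum.inr a
              · exact Or.inr (Or.inr ⟨h4 hR hL, hIR a hR⟩)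
              · rcases ht with h | h | h
                · exact Or.inl h
                · exact absurd (h1 h) hL
                · exact absurd (h2 h) hR
          have hres : IsResCircuit tl hd u f hm c := by
            refine ⟨?_, hcyc, htinj⟩
            intro i
            rcases hi : c i with b | b
            · have hv := hval i
              rw [hi] at hv
              have hv' : 0 < g b - f b := hv
              have := (hg.2 b).2
              show f b < u b
              omega
            · have hv := hval i
              rw [hi] at hv
              have hv' : 0 < -(g b - f b) := hv
              have := (hg.2 b).1
              show 0 < f b
              omega
          have hprof := hcirc m hm c hres
          have hg'c : IsCirculation tl hd (fun a => g a - circE c a) := by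
            intro v
            simp only
            rw [Finset.sum_sub_distrib, Finset.sum_sub_distrib, hg.1 v,
              circE_circulation hm tl hd c hcyc v]
          have hg'b : ∀ a, 0 ≤ g a - circE c a ∧ g a - circE c a ≤ u a := by
            intro a
            have h1 := hg.2 a
            have h2 := hfb a
            rcases htri a with h | ⟨h, h'⟩ | ⟨h, h'⟩ <;> rw [h] <;> omega
          have hmeas : ∑ a, ((g a - circE c a) - f a).natAbs ≤ N := by
            have hlt : ∑ a, ((g a - circE c a) - f a).natAbs
                < ∑ a, (g a - f a).natAbs := by
              apply Finset.sum_lt_sum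
              · intro a _
                rcases htri a with h | ⟨h, h'⟩ | ⟨h, h'⟩ <;> rw [h] <;> omega
              · rcases h0 : c ⟨0, hm⟩ with b | b
                · have hb := hIL b ⟨_, h0⟩
                  have hnR : ¬∃ i, c i = Sum.inr b := fun hR => absurd (hIR b hR) (by omega)
                  have hb1 : circE c b = 1 :=
                    (circE_cases c hinj b).2.2.2.1 ⟨_, h0⟩ hnR
                  exact ⟨b, mem_univ b, by rw [hb1]; omega⟩
                · have hb := hIR b ⟨_, h0⟩
                  have hnL : ¬∃ i, c i = Sum.inl b := fun hL => absurd (hIL b hL) (by omega)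
                  have hb1 : circE c b = -1 :=
                    (circE_cases c hinj b).2.2.2.2 ⟨_, h0⟩ hnL
                  exact ⟨b, mem_univ b, by rw [hb1]; omega⟩
            omega
          have ihg' := ih (fun a => g a - circE c a) ⟨hg'c, hg'b⟩ hmeas
          have hsplit : ∑ a, p a * (g a : ℚ)
              = ∑ a, p a * ((g a - circE c a : ℤ) : ℚ) + ∑ i, resProfit p (c i) := by
            rw [← circE_profit c p, ← Finset.sum_add_distrib]
            refine Finset.sum_congr rfl fun a _ => ?_
            push_cast
            ring
          rw [hsplit]
          linarith
    intro g hg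
    exact main _ g hg le_rfl
end

section
/- Let R ∈ ℝ^{n×r} and s ≤ n, d' ≤ r. The optimal value of sparse PCA, max over X ∈ ℝ^{n×d} with XᵀX = I_d and |supp(X)| ≤ s of ‖Rᵀ X‖_F², equals max over pairs (S, Y) with S ⊆ [n], |S| = s, Y ∈ ℝ^{r×d'}, YᵀY = I_{d'}, of ‖R_S Y‖_F², where d' = min(d, r) and d ≤ s. -/
open Matrix Finset
open scoped Classical

/-- The row-submatrix of `R` with rows indexed by the finite set `S`. -/
def subRows {n r : ℕ} (R : Matrix (Fin n) (Fin r) ℝ) (S : Finset (Fin n)) :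
    Matrix ↥S (Fin r) ℝ :=
  fun j k => R j.1 k

open scoped RealInnerProductSpace

section Frob2Lemmas

variable {m p q : Type*} [Fintype m] [Fintype p] [Fintype q]

lemma frob2_nonneg (M : Matrix m p ℝ) : 0 ≤ frob2 M :=
  Finset.sum_nonneg fun _ _ => Finset.sum_nonneg fun _ _ => sq_nonneg _

lemma frob2_eq_trace (M : Matrix m p ℝ) : frob2 M = (Mᵀ * M).trace := by
  simp only [frob2, Matrix.trace, Matrix.diag, Matrix.mul_apply, Matrix.transpose_apply, sq]
  rw [Finset.sum_comm]

lemma frob2_transpose (M : Matrix m p ℝ) : frob2 Mᵀ = frob2 M := by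
  simp only [frob2, Matrix.transpose_apply]
  rw [Finset.sum_comm]

lemma frob2_left_isometry [DecidableEq p] (U : Matrix m p ℝ) (B : Matrix p q ℝ)
    (hU : Uᵀ * U = 1) : frob2 (U * B) = frob2 B := by
  rw [frob2_eq_trace, frob2_eq_trace, Matrix.transpose_mul, Matrix.mul_assoc,
    ← Matrix.mul_assoc Uᵀ U B, hU, Matrix.one_mul]

lemma frob2_right_contraction [DecidableEq p] [DecidableEq q]
    (A : Matrix m p ℝ) (X : Matrix p q ℝ) (hX : Xᵀ * X = 1) :
    frob2 (A * X) ≤ frob2 A := by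
  set P : Matrix p p ℝ := 1 - X * Xᵀ with hP
  have hPt : Pᵀ = P := by simp [hP, Matrix.transpose_sub, Matrix.transpose_mul]
  have hPP : P * P = P := by
    simp only [hP, Matrix.sub_mul, Matrix.mul_sub, Matrix.one_mul, Matrix.mul_one]
    rw [Matrix.mul_assoc X Xᵀ (X * Xᵀ), ← Matrix.mul_assoc Xᵀ X Xᵀ, hX, Matrix.one_mul]
    abel
  have key : frob2 (A * P) = frob2 A - frob2 (A * X) := by
    rw [frob2_eq_trace, frob2_eq_trace, frob2_eq_trace]
    have h1 : ((A * P)ᵀ * (A * P)).trace = ((Aᵀ * A) * P).trace := by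
      simp only [Matrix.transpose_mul, hPt]
      calc (P * Aᵀ * (A * P)).trace
          = (P * Aᵀ * A * P).trace := by simp only [Matrix.mul_assoc]
        _ = (P * (P * Aᵀ * A)).trace := Matrix.trace_mul_comm _ P
        _ = (P * P * (Aᵀ * A)).trace := by simp only [Matrix.mul_assoc]
        _ = (P * (Aᵀ * A)).trace := by rw [hPP]
        _ = ((Aᵀ * A) * P).trace := Matrix.trace_mul_comm _ _
    have h2 : ((A * X)ᵀ * (A * X)).trace = ((Aᵀ * A) * (X * Xᵀ)).trace := by
      simp only [Matrix.transpose_mul]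
      calc (Xᵀ * Aᵀ * (A * X)).trace
          = (Xᵀ * (Aᵀ * A * X)).trace := by simp only [Matrix.mul_assoc]
        _ = ((Aᵀ * A * X) * Xᵀ).trace := Matrix.trace_mul_comm _ _
        _ = ((Aᵀ * A) * (X * Xᵀ)).trace := by simp only [Matrix.mul_assoc]
    rw [h1, h2, hP, Matrix.mul_sub, Matrix.mul_one, Matrix.trace_sub]
  have := frob2_nonneg (A * P)
  linarith

end Frob2Lemmas

lemma onb_expand {E : Type*} [NormedAddCommGroup E] [InnerProductSpace ℝ E] {e : ℕ}
    {f : Fin e → E} (hf : Orthonormal ℝ f) {x : E}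
    (hx : x ∈ Submodule.span ℝ (Set.range f)) :
    ∑ j, ⟪f j, x⟫ • f j = x := by
  induction hx using Submodule.span_induction with
  | mem y hy =>
    obtain ⟨i, rfl⟩ := hy
    simp [orthonormal_iff_ite.mp hf, ite_smul]
  | zero => simp
  | add x y hx hy ihx ihy =>
    simp only [inner_add_right, add_smul, Finset.sum_add_distrib, ihx, ihy]
  | smul a x hx ih =>
    simp only [inner_smul_right, mul_smul, ← Finset.smul_sum, ih]

lemma exists_extension {m : Type*} [Fintype m] [DecidableEq m] {dN e : ℕ}
    (N : Matrix m (Fin dN) ℝ) (he1 : min dN (Fintype.card m) ≤ e)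
    (he2 : e ≤ Fintype.card m) :
    ∃ U : Matrix m (Fin e) ℝ, Uᵀ * U = 1 ∧ U * (Uᵀ * N) = N := by
  set E := EuclideanSpace ℝ m
  set cols : Fin dN → E := fun j => WithLp.toLp 2 (fun i => N i j) with hcols
  set W : Submodule ℝ E := Submodule.span ℝ (Set.range cols) with hW
  have hdimE : Module.finrank ℝ E = Fintype.card m := finrank_euclideanSpace
  set m0 := Module.finrank ℝ W with hm0
  have hWd : m0 ≤ dN := by
    have h := finrank_range_le_card (R := ℝ) cols
    rw [Fintype.card_fin] at h
    exact h
  have hWm : m0 ≤ Fintype.card m := hdimE ▸ W.finrank_le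
  have hm0e : m0 ≤ e := le_trans (le_min hWd hWm) he1
  set m1 := Module.finrank ℝ Wᗮ with hm1
  have hsum : m0 + m1 = Fintype.card m := by
    rw [hm0, hm1, W.finrank_add_finrank_orthogonal, hdimE]
  set b1 := stdOrthonormalBasis ℝ W
  set b2 := stdOrthonormalBasis ℝ Wᗮ
  set g : Fin m0 ⊕ Fin m1 → E := Sum.elim (fun i => (b1 i : E)) (fun i => (b2 i : E)) with hg
  have hgon : Orthonormal ℝ g := by
    rw [orthonormal_iff_ite]
    rintro (i | i) (j | j)
    · have := orthonormal_iff_ite.mp b1.orthonormal i j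
      simpa [hg, Submodule.coe_inner] using this
    · simp [hg]
      exact Submodule.inner_right_of_mem_orthogonal (b1 i).2 (b2 j).2
    · simp [hg]
      exact (Submodule.inner_left_of_mem_orthogonal (b1 j).2 (b2 i).2)
    · have := orthonormal_iff_ite.mp b2.orthonormal i j
      simpa [hg, Submodule.coe_inner] using this
  set ι : Fin e → Fin m0 ⊕ Fin m1 := fun j =>
    if h : (j : ℕ) < m0 then Sum.inl ⟨j, h⟩
    else Sum.inr ⟨(j : ℕ) - m0, by omega⟩ with hι
  have hιinj : Function.Injective ι := by
    intro a b hab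
    by_cases ha : (a : ℕ) < m0 <;> by_cases hb : (b : ℕ) < m0 <;>
      simp only [hι, ha, hb, dif_pos, dif_neg, not_false_iff] at hab <;>
      first
      | (apply Fin.ext; simpa [Fin.ext_iff] using hab)
      | (simp at hab; apply Fin.ext; omega)
      | (apply Fin.ext; simp [Sum.inr.injEq, Fin.ext_iff] at hab; omega)
  set f : Fin e → E := g ∘ ι with hf
  have hfon : Orthonormal ℝ f := hgon.comp ι hιinj
  have hWf : W ≤ Submodule.span ℝ (Set.range f) := by
    rw [hW]
    apply Submodule.span_le.mpr
    rintro _ ⟨c, rfl⟩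
    have hc : cols c ∈ W := Submodule.subset_span ⟨c, rfl⟩
    have hspan : Submodule.span ℝ (Set.range fun i => (b1 i : E)) = W := by
      have h1 : (Set.range fun i => (b1 i : E)) = W.subtype '' Set.range b1 := by
        ext x
        constructor
        · rintro ⟨i, rfl⟩; exact ⟨b1 i, ⟨i, rfl⟩, rfl⟩
        · rintro ⟨y, ⟨i, rfl⟩, rfl⟩; exact ⟨i, rfl⟩
      rw [h1, Submodule.span_image, ← b1.coe_toBasis, Module.Basis.span_eq,
        Submodule.map_subtype_top]
    have hsub : (Set.range fun i => (b1 i : E)) ⊆ Set.range f := by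
      rintro _ ⟨i, rfl⟩
      refine ⟨⟨(i : ℕ), lt_of_lt_of_le i.2 hm0e⟩, ?_⟩
      simp only [hf, Function.comp_apply, hι]
      rw [dif_pos i.2]
      simp [hg]
    rw [← hspan] at hc
    exact Submodule.span_mono hsub hc
  set U : Matrix m (Fin e) ℝ := fun i j => f j i with hU
  have hU1 : Uᵀ * U = 1 := by
    ext j k
    have hjk := orthonormal_iff_ite.mp hfon j k
    rw [PiLp.inner_apply] at hjk
    simp only [RCLike.inner_apply, starRingEnd_apply, star_trivial] at hjk
    simp only [Matrix.mul_apply, Matrix.transpose_apply, Matrix.one_apply]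
    rw [← hjk]; exact Finset.sum_congr rfl fun _ _ => mul_comm _ _
  refine ⟨U, hU1, ?_⟩
  ext i c
  have hcol : (WithLp.toLp 2 (fun i' => N i' c) : E) ∈ Submodule.span ℝ (Set.range f) :=
    hWf (Submodule.subset_span ⟨c, rfl⟩)
  have hexp := onb_expand hfon hcol
  have h3 : ∀ j, ∑ i', U i' j * N i' c = ⟪f j, (WithLp.toLp 2 (fun i' => N i' c) : E)⟫ := by
    intro j
    rw [PiLp.inner_apply]
    simp only [RCLike.inner_apply, starRingEnd_apply, star_trivial]
    exact Finset.sum_congr rfl fun _ _ => mul_comm _ _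
  have h5 : (∑ j, (⟪f j, (WithLp.toLp 2 (fun i' => N i' c) : E)⟫ : ℝ) • f j) i
      = ∑ j, (⟪f j, (WithLp.toLp 2 (fun i' => N i' c) : E)⟫ : ℝ) * f j i := by
    rw [WithLp.ofLp_sum, Finset.sum_apply]
    rfl
  simp only [Matrix.mul_apply, Matrix.transpose_apply, h3]
  have h6 : (∑ j, (⟪f j, (WithLp.toLp 2 (fun i' => N i' c) : E)⟫ : ℝ) • f j) i = N i c := by rw [hexp]
  rw [h5] at h6
  rw [← h6]
  exact Finset.sum_congr rfl fun j _ => mul_comm _ _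

lemma frob2_swap {m q : Type*} [Fintype m] [Fintype q] [DecidableEq m] {dX e : ℕ}
    (A : Matrix m q ℝ) (X : Matrix q (Fin dX) ℝ) (hX : Xᵀ * X = 1)
    (he1 : min dX (Fintype.card m) ≤ e) (he2 : e ≤ Fintype.card m) :
    ∃ U : Matrix m (Fin e) ℝ, Uᵀ * U = 1 ∧ frob2 (A * X) ≤ frob2 (Aᵀ * U) := by
  obtain ⟨U, hU1, hU2⟩ := exists_extension (A * X) he1 he2
  refine ⟨U, hU1, ?_⟩
  calc frob2 (A * X) = frob2 (U * (Uᵀ * (A * X))) := by rw [hU2]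
    _ = frob2 (Uᵀ * (A * X)) := frob2_left_isometry _ _ hU1
    _ = frob2 ((Uᵀ * A) * X) := by rw [Matrix.mul_assoc]
    _ ≤ frob2 (Uᵀ * A) := frob2_right_contraction _ _ hX
    _ = frob2 (Aᵀ * U) := by rw [← frob2_transpose (Uᵀ * A), Matrix.transpose_mul,
        Matrix.transpose_transpose]

noncomputable def cMat (p e : ℕ) : Matrix (Fin p) (Fin e) ℝ :=
  fun i j => if (i : ℕ) = (j : ℕ) then 1 else 0

lemma cMat_orth {e p : ℕ} (h : e ≤ p) : (cMat p e)ᵀ * cMat p e = 1 := by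
  ext j k
  simp only [Matrix.mul_apply, Matrix.transpose_apply, cMat]
  have h1 : ∀ i : Fin p, ((i : ℕ) = (j : ℕ)) = (i = Fin.castLE h j) := by
    intro i; rw [eq_iff_iff, Fin.ext_iff]; simp
  have h2 : ∀ i : Fin p, ((i : ℕ) = (k : ℕ)) = (i = Fin.castLE h k) := by
    intro i; rw [eq_iff_iff, Fin.ext_iff]; simp
  simp only [h1, h2, ite_mul, one_mul, zero_mul]
  rw [Finset.sum_ite_eq' univ (Fin.castLE h j)
    (fun i => if i = Fin.castLE h k then (1:ℝ) else 0)]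
  simp only [Finset.mem_univ, if_true, Matrix.one_apply]
  by_cases hjk : j = k
  · subst hjk; simp
  · rw [if_neg (by simpa [Fin.ext_iff] using fun hh => hjk (Fin.ext hh)), if_neg hjk]

lemma cMat_card {e p : ℕ} (h : e ≤ p) :
    (univ.filter fun i : Fin p => cMat p e i ≠ 0).card ≤ e := by
  have hsub : (univ.filter fun i : Fin p => cMat p e i ≠ 0) ⊆
      univ.image (Fin.castLE h) := by
    intro i hi
    simp only [Finset.mem_filter, Finset.mem_univ, true_and] at hi
    have : ∃ j : Fin e, cMat p e i j ≠ 0 := by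
      by_contra hc
      push_neg at hc
      exact hi (funext hc)
    obtain ⟨j, hj⟩ := this
    simp only [cMat, ne_eq, ite_eq_right_iff, not_forall] at hj
    obtain ⟨hij, -⟩ := hj
    exact Finset.mem_image.mpr ⟨j, Finset.mem_univ _, Fin.ext hij.symm⟩
  calc (univ.filter fun i : Fin p => cMat p e i ≠ 0).card
      ≤ (univ.image (Fin.castLE h)).card := Finset.card_le_card hsub
    _ ≤ (univ : Finset (Fin e)).card := Finset.card_image_le
    _ = e := by simp

lemma sum_restrict {n' : ℕ} {T : Finset (Fin n')} (g : Fin n' → ℝ)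
    (hg : ∀ i ∉ T, g i = 0) : ∑ i, g i = ∑ i : ↥T, g i.1 := by
  rw [Finset.sum_coe_sort T g]
  exact (Finset.sum_subset (Finset.subset_univ T) fun x _ hx => hg x hx).symm

section Compactness

variable {m q : Type*} [Fintype m] [Fintype q] [DecidableEq q]

lemma stiefel_entry_bound (X : Matrix m q ℝ) (hX : Xᵀ * X = 1) (i : m) (j : q) :
    -1 ≤ X i j ∧ X i j ≤ 1 := by
  have h1 : (Xᵀ * X) j j = 1 := by rw [hX]; simp [Matrix.one_apply]
  rw [Matrix.mul_apply] at h1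
  simp only [Matrix.transpose_apply] at h1
  have h2 : X i j * X i j ≤ 1 := by
    rw [← h1]
    exact Finset.single_le_sum (fun k _ => mul_self_nonneg (X k j)) (Finset.mem_univ i)
  constructor <;> nlinarith

lemma isCompact_stiefel : IsCompact {X : Matrix m q ℝ | Xᵀ * X = 1} := by
  have hbox : IsCompact ((Set.univ : Set m).pi fun _ =>
      (Set.univ : Set q).pi fun _ => Set.Icc (-1 : ℝ) 1) :=
    isCompact_univ_pi fun _ => isCompact_univ_pi fun _ => isCompact_Icc
  apply IsCompact.of_isClosed_subset hbox
  · exact isClosed_eq ((continuous_id.matrix_transpose).matrix_mul continuous_id)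
      continuous_const
  · intro X hX
    exact Set.mem_pi.mpr fun i _ => Set.mem_pi.mpr fun j _ =>
      Set.mem_Icc.mpr (stiefel_entry_bound X hX i j)

lemma isClosed_suppIn (T : Finset m) :
    IsClosed {X : Matrix m q ℝ | ∀ j ∉ T, X j = 0} := by
  have : {X : Matrix m q ℝ | ∀ j ∉ T, X j = 0} =
      ⋂ (j : m) (_ : j ∉ T) (k : q), {X : Matrix m q ℝ | X j k = 0} := by
    ext X; simp [funext_iff]
  rw [this]
  exact isClosed_iInter fun j => isClosed_iInter fun _ => isClosed_iInter fun k =>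
    isClosed_eq (continuous_id.matrix_elem j k) continuous_const

lemma continuous_frob2_mul {p : Type*} [Fintype p] (C : Matrix p m ℝ) :
    Continuous fun X : Matrix m q ℝ => frob2 (C * X) := by
  have hC : Continuous fun X : Matrix m q ℝ => C * X :=
    continuous_const.matrix_mul continuous_id
  exact continuous_finset_sum _ fun i _ => continuous_finset_sum _ fun j _ =>
    (hC.matrix_elem i j).pow 2

end Compactness

/-- The optimal value of sparse PCA, max of ‖Rᵀ X‖_F² over n×d orthonormal-column X with
at most s nonzero rows, equals the max over pairs (S, Y) with |S| = s and YᵀY = I_{d'} of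
‖R_S Y‖_F², where d' = min(d, r). -/
theorem stmt19 {n r : ℕ} (R : Matrix (Fin n) (Fin r) ℝ) (d s : ℕ) (hd : 0 < d)
    (hds : d ≤ s) (hsn : s ≤ n) :
    ∃ v : ℝ,
      IsGreatest {v | ∃ X : Matrix (Fin n) (Fin d) ℝ, Xᵀ * X = 1 ∧
        (univ.filter fun j => X j ≠ 0).card ≤ s ∧ v = frob2 (Rᵀ * X)} v ∧
      IsGreatest {v | ∃ (S : Finset (Fin n)) (Y : Matrix (Fin r) (Fin (min d r)) ℝ),
        S.card = s ∧ Yᵀ * Y = 1 ∧ v = frob2 (subRows R S * Y)} v := by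
  classical
  set SA := {v | ∃ X : Matrix (Fin n) (Fin d) ℝ, Xᵀ * X = 1 ∧
    (univ.filter fun j => X j ≠ 0).card ≤ s ∧ v = frob2 (Rᵀ * X)} with hSA
  set SB := {v | ∃ (S : Finset (Fin n)) (Y : Matrix (Fin r) (Fin (min d r)) ℝ),
    S.card = s ∧ Yᵀ * Y = 1 ∧ v = frob2 (subRows R S * Y)} with hSB
  have hdn : d ≤ n := le_trans hds hsn
  -- compactness of SA
  have hAeq : SA = ⋃ T ∈ {T : Finset (Fin n) | T.card = s},
      (fun X : Matrix (Fin n) (Fin d) ℝ => frob2 (Rᵀ * X)) ''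
        ({X | Xᵀ * X = 1} ∩ {X | ∀ j ∉ T, X j = 0}) := by
    ext v
    simp only [hSA, Set.mem_setOf_eq, Set.mem_iUnion, Set.mem_image, Set.mem_inter_iff,
      exists_prop]
    constructor
    · rintro ⟨X, hX1, hX2, rfl⟩
      obtain ⟨T, hsubT, hTcard⟩ := Finset.exists_superset_card_eq hX2
        (by simpa using hsn)
      refine ⟨T, hTcard, X, ⟨hX1, ?_⟩, rfl⟩
      intro j hj
      by_contra hc
      exact hj (hsubT (Finset.mem_filter.mpr ⟨Finset.mem_univ _, hc⟩))
    · rintro ⟨T, hTcard, X, ⟨hX1, hX2⟩, rfl⟩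
      refine ⟨X, hX1, ?_, rfl⟩
      calc (univ.filter fun j => X j ≠ 0).card ≤ T.card := by
            apply Finset.card_le_card
            intro j hj
            simp only [Finset.mem_filter, Finset.mem_univ, true_and] at hj
            by_contra hc
            exact hj (hX2 j hc)
        _ = s := hTcard
  have hAcomp : IsCompact SA := by
    rw [hAeq]
    exact Set.Finite.isCompact_biUnion (Set.toFinite _) fun T _ =>
      ((isCompact_stiefel.inter_right (isClosed_suppIn T)).image (continuous_frob2_mul Rᵀ))
  have hAne : SA.Nonempty := by
    refine ⟨frob2 (Rᵀ * cMat n d), cMat n d, cMat_orth hdn, ?_, rfl⟩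
    exact le_trans (cMat_card hdn) hds
  obtain ⟨v, hvA⟩ := hAcomp.exists_isGreatest hAne
  -- compactness of SB
  have hBeq : SB = ⋃ S ∈ {S : Finset (Fin n) | S.card = s},
      (fun Y : Matrix (Fin r) (Fin (min d r)) ℝ => frob2 (subRows R S * Y)) ''
        {Y | Yᵀ * Y = 1} := by
    ext w
    simp only [hSB, Set.mem_setOf_eq, Set.mem_iUnion, Set.mem_image, exists_prop]
    constructor
    · rintro ⟨S, Y, hScard, hY1, rfl⟩
      exact ⟨S, hScard, Y, hY1, rfl⟩
    · rintro ⟨S, hScard, Y, hY1, rfl⟩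
      exact ⟨S, Y, hScard, hY1, rfl⟩
  have hBcomp : IsCompact SB := by
    rw [hBeq]
    exact Set.Finite.isCompact_biUnion (Set.toFinite _) fun S _ =>
      (isCompact_stiefel.image (continuous_frob2_mul (subRows R S)))
  have hBne : SB.Nonempty := by
    obtain ⟨S0, -, hS0⟩ := Finset.exists_subset_card_eq
      (show s ≤ (univ : Finset (Fin n)).card by simpa using hsn)
    exact ⟨frob2 (subRows R S0 * cMat r (min d r)), S0, cMat r (min d r), hS0,
      cMat_orth (min_le_right d r), rfl⟩
  obtain ⟨w, hwB⟩ := hBcomp.exists_isGreatest hBne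
  -- A-values are dominated by B-values
  have hAtoB : ∀ a ∈ SA, ∃ b ∈ SB, a ≤ b := by
    rintro a ⟨X, hX1, hX2, rfl⟩
    obtain ⟨T, hsubT, hTcard⟩ := Finset.exists_superset_card_eq hX2 (by simpa using hsn)
    have hXzero : ∀ i ∉ T, X i = 0 := by
      intro i hi
      by_contra hc
      exact hi (hsubT (Finset.mem_filter.mpr ⟨Finset.mem_univ _, hc⟩))
    set X' : Matrix ↥T (Fin d) ℝ := fun i j => X i.1 j with hX'
    have hX'orth : X'ᵀ * X' = 1 := by
      ext j k
      have h0 := congrFun (congrFun hX1 j) k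
      rw [Matrix.mul_apply] at h0
      simp only [Matrix.transpose_apply] at h0
      rw [sum_restrict (T := T) (fun i => X i j * X i k)
        (fun i hi => by simp [hXzero i hi])] at h0
      rw [← h0, Matrix.mul_apply]
      simp only [Matrix.transpose_apply, hX']
      rfl
    have hval : Rᵀ * X = (subRows R T)ᵀ * X' := by
      ext k j
      rw [Matrix.mul_apply, Matrix.mul_apply]
      simp only [Matrix.transpose_apply, subRows, hX']
      exact sum_restrict (T := T) (fun i => R i k * X i j)
        (fun i hi => by simp [hXzero i hi])
    obtain ⟨U, hU1, hU2⟩ := frob2_swap (e := min d r) ((subRows R T)ᵀ) X' hX'orth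
      (by simp) (by simpa using min_le_right d r)
    rw [Matrix.transpose_transpose] at hU2
    exact ⟨frob2 (subRows R T * U), ⟨T, U, hTcard, hU1, rfl⟩, by rw [hval]; exact hU2⟩
  -- B-values are dominated by A-values
  have hBtoA : ∀ b ∈ SB, ∃ a ∈ SA, b ≤ a := by
    rintro b ⟨S, Y, hScard, hY1, rfl⟩
    have hcardS : Fintype.card ↥S = s := by rw [Fintype.card_coe, hScard]
    obtain ⟨W, hW1, hW2⟩ := frob2_swap (e := d) (subRows R S) Y hY1
      (by rw [hcardS]; exact le_trans (min_le_left _ _) (min_le_left d r))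
      (by rw [hcardS]; exact hds)
    set X : Matrix (Fin n) (Fin d) ℝ :=
      fun i j => if h : i ∈ S then W ⟨i, h⟩ j else 0 with hX
    have hXzero : ∀ i ∉ S, X i = 0 := by
      intro i hi
      funext j
      simp [hX, dif_neg hi]
    have hXin : ∀ i : ↥S, ∀ j, X i.1 j = W i j := by
      rintro ⟨i, hi⟩ j
      simp [hX, dif_pos hi]
    have hXorth : Xᵀ * X = 1 := by
      ext j k
      rw [Matrix.mul_apply]
      simp only [Matrix.transpose_apply]
      rw [sum_restrict (T := S) (fun i => X i j * X i k)
        (fun i hi => by simp [hXzero i hi])]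
      have h0 := congrFun (congrFun hW1 j) k
      rw [Matrix.mul_apply] at h0
      simp only [Matrix.transpose_apply] at h0
      rw [← h0]
      exact Finset.sum_congr rfl fun i _ => by rw [hXin i j, hXin i k]
    have hcardX : (univ.filter fun j => X j ≠ 0).card ≤ s := by
      calc (univ.filter fun j => X j ≠ 0).card ≤ S.card := by
            apply Finset.card_le_card
            intro i hi
            simp only [Finset.mem_filter, Finset.mem_univ, true_and] at hi
            by_contra hc
            exact hi (hXzero i hc)
        _ = s := hScard
    have hval : Rᵀ * X = (subRows R S)ᵀ * W := by
      ext k j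
      rw [Matrix.mul_apply, Matrix.mul_apply]
      simp only [Matrix.transpose_apply, subRows]
      rw [sum_restrict (T := S) (fun i => R i k * X i j)
        (fun i hi => by simp [hXzero i hi])]
      exact Finset.sum_congr rfl fun i _ => by rw [hXin i j]
    exact ⟨frob2 (Rᵀ * X), ⟨X, hXorth, by convert hcardX, rfl⟩, by rw [hval]; exact hW2⟩
  have hvw : v = w := by
    obtain ⟨b, hbB, hvb⟩ := hAtoB v hvA.1
    obtain ⟨a, haA, hwa⟩ := hBtoA w hwB.1
    exact le_antisymm (le_trans hvb (hwB.2 hbB)) (le_trans hwa (hvA.2 haA))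
  exact ⟨v, hvA, hvw ▸ hwB⟩
end
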